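/- arXiv:1510.05906 — 4 statements merged into one kernel-verified Lean document; each statement's English description precedes it below -/
import Mathlib

section
/- Let A₁, A₂ be m×n complex matrices and B₁, B₂ be n×m complex matrices (more generally Aᵢ of size m×nᵢ and Bᵢ of size nᵢ×m). Define the block matrices A₃ = [A₁ | A₂ + A₁B₁A₂] (size m×(n₁+n₂)) and B₃ = [B₁; B₂] (size (n₁+n₂)×m, stacked vertically). Then det(I + B₃A₃) = det(I + B₁A₁)·det(I + B₂A₂). -/
open Matrix

section

variable {R m n₁ n₂ : Type*} [Fintype m] [Fintype n₁] [Fintype n₂]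
  [DecidableEq n₁] [DecidableEq n₂]

theorem Matrix.one_add_fromRows_mul_fromCols_eq_fromBlocks_mul [Semiring R]
    (A₁ : Matrix m n₁ R) (A₂ : Matrix m n₂ R) (B₁ : Matrix n₁ m R) (B₂ : Matrix n₂ m R) :
    1 + fromRows B₁ B₂ * fromCols A₁ (A₂ + A₁ * B₁ * A₂)
      = fromBlocks (1 + B₁ * A₁) 0 0 1 * fromBlocks 1 0 (B₂ * A₁) 1 *
          fromBlocks 1 (B₁ * A₂) 0 (1 + B₂ * A₂) := by
  rw [fromRows_mul_fromCols, ← fromBlocks_one, fromBlocks_add, fromBlocks_multiply,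
    fromBlocks_multiply]
  simp only [Matrix.mul_one, Matrix.one_mul, Matrix.mul_zero, Matrix.zero_mul, add_zero,
    zero_add, Matrix.mul_add, Matrix.add_mul, Matrix.mul_assoc]
  congr 1
  abel

theorem Matrix.det_one_add_fromRows_mul_fromCols [CommRing R]
    (A₁ : Matrix m n₁ R) (A₂ : Matrix m n₂ R) (B₁ : Matrix n₁ m R) (B₂ : Matrix n₂ m R) :
    (1 + fromRows B₁ B₂ * fromCols A₁ (A₂ + A₁ * B₁ * A₂)).det
      = (1 + B₁ * A₁).det * (1 + B₂ * A₂).det := by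
  rw [one_add_fromRows_mul_fromCols_eq_fromBlocks_mul, det_mul, det_mul,
    det_fromBlocks_zero₂₁, det_fromBlocks_zero₂₁, det_fromBlocks_zero₁₂]
  simp only [det_one, mul_one, one_mul]

end

/-- Multiplicativity of the "small" determinants under the block composition
`A₃ = [A₁ | A₂ + A₁B₁A₂]`, `B₃ = [B₁; B₂]`. -/
theorem stmt2 {m n₁ n₂ : ℕ}
    (A₁ : Matrix (Fin m) (Fin n₁) ℂ) (A₂ : Matrix (Fin m) (Fin n₂) ℂ)
    (B₁ : Matrix (Fin n₁) (Fin m) ℂ) (B₂ : Matrix (Fin n₂) (Fin m) ℂ) :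
    (1 + Matrix.fromRows B₁ B₂ * Matrix.fromCols A₁ (A₂ + A₁ * B₁ * A₂)).det
      = (1 + B₁ * A₁).det * (1 + B₂ * A₂).det :=
  det_one_add_fromRows_mul_fromCols A₁ A₂ B₁ B₂
end

section
/- Let H = L²([0,1]²,ℂ) and let 𝒜 be the operator 𝒜u(k₁,k₂) = −∫₀¹ u(s,k₂)ds − f(k₁)∫₀¹ f(s)u(s,k₂)ds − ∫₀¹∫₀¹ u(s,t) ds dt, where f ∈ C([0,1],ℝ) with ∫₀¹ f = 0. Then for any λ ∉ {0, −1, −∫₀¹f², −2}, the operator λI − 𝒜 is invertible, and its inverse is λ⁻¹ (I − (λ+2)⁻¹⟨·⟩₂) ∘ (I − (λ+1)⁻¹⟨·⟩₁ − f(λ+⟨f²⟩)⁻¹⟨f·⟩₁), where ⟨u⟩₁(k₂) = ∫₀¹u(s,k₂)ds and ⟨u⟩₂ = ∫₀¹∫₀¹ u. -/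
/-!
Write `g` for `f` viewed as complex-valued and `T k = k • 1 - 𝒜`. Up to null sets,
`T k u = k u + ⟨u⟩₁ + g ⟨g u⟩₁ + ⟨u⟩₂`, and since `∫ g = 0` and both factors are probability
spaces, `T k` acts triangularly on the three statistics: `⟨T k u⟩₁ = (k + 1) ⟨u⟩₁ + ⟨u⟩₂`,
`⟨g T k u⟩₁ = (k + c) ⟨g u⟩₁`, `⟨T k u⟩₂ = (k + 2) ⟨u⟩₂`. Applying `T (-2)`, `T (-c)`, `T (-1)`
kills `⟨·⟩₂`, then `⟨g ·⟩₁`, then `⟨·⟩₁`, after which `T 0` kills everything. So `𝒜` is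
annihilated by `X (X + 1) (X + c) (X + 2)`, and `λ - 𝒜` is invertible for every `λ` that is not
a root. The inverse formula comes from solving `T λ v = u` for `v` through the three statistics.
-/

open MeasureTheory Set

open Polynomial in
theorem isUnit_algebraMap_sub_of_aeval_eq_zero {K R : Type*} [Field K] [Ring R] [Algebra K R]
    {a : R} {p : K[X]} (hp : aeval a p = 0) {l : K} (hl : p.eval l ≠ 0) :
    IsUnit (algebraMap K R l - a) := by
  nontriviality R
  rw [← spectrum.notMem_iff]
  intro hmem
  have := spectrum.subset_polynomial_aeval a p ⟨l, hmem, rfl⟩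
  rw [hp, spectrum.zero_eq, Set.mem_singleton_iff] at this
  exact hl this

section

variable {α β : Type*} [MeasurableSpace α] [MeasurableSpace β]

/-- The paper's `⟨u⟩₁`. -/
noncomputable def sliceIntegral (μ : Measure α) (u : α × β → ℂ) (y : β) : ℂ := ∫ x, u (x, y) ∂μ

noncomputable def averagingOperator (μ : Measure α) (ν : Measure β) (g : α → ℂ) (u : α × β → ℂ) :
    α × β → ℂ := fun p =>
  -sliceIntegral μ u p.2 - g p.1 * sliceIntegral μ (fun q => g q.1 * u q) p.2 -
    ∫ q, u q ∂μ.prod ν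

variable {μ : Measure α} {ν : Measure β} {g : α → ℂ}

theorem sliceIntegral_congr_ae [SFinite μ] [SFinite ν] {u w : α × β → ℂ}
    (h : u =ᵐ[μ.prod ν] w) : sliceIntegral μ u =ᵐ[ν] sliceIntegral μ w := by
  have hswap : ∀ᵐ z ∂ν.prod μ, u z.swap = w z.swap :=
    Measure.measurePreserving_swap.quasiMeasurePreserving.tendsto_ae.eventually h
  filter_upwards [Measure.ae_ae_of_ae_prod hswap] with y hy
  exact integral_congr_ae hy

theorem integrable_sliceIntegral [SFinite μ] [SFinite ν] {u : α × β → ℂ}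
    (hu : Integrable u (μ.prod ν)) : Integrable (sliceIntegral μ u) ν :=
  hu.integral_prod_right

theorem integral_sliceIntegral [SFinite μ] [SFinite ν] {u : α × β → ℂ}
    (hu : Integrable u (μ.prod ν)) : ∫ y, sliceIntegral μ u y ∂ν = ∫ p, u p ∂μ.prod ν :=
  (integral_prod_symm u hu).symm

theorem integrable_fst_mul [IsFiniteMeasure ν] (hg : MemLp g 2 μ)
    (v : Lp ℂ 2 (μ.prod ν)) : Integrable (fun p => g p.1 * v p) (μ.prod ν) :=
  (hg.comp_fst ν).integrable_mul (Lp.memLp v)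

variable {A : Lp ℂ 2 (μ.prod ν) →L[ℂ] Lp ℂ 2 (μ.prod ν)}

theorem smul_one_sub_apply_ae_eq (hA : ∀ u, A u =ᵐ[μ.prod ν] averagingOperator μ ν g u)
    (k : ℂ) (v : Lp ℂ 2 (μ.prod ν)) :
    ((k • 1 - A) v : α × β → ℂ) =ᵐ[μ.prod ν] fun p =>
      k * v p + sliceIntegral μ v p.2 + g p.1 * sliceIntegral μ (fun q => g q.1 * v q) p.2 +
        ∫ q, v q ∂μ.prod ν := by
  rw [sub_apply, smul_apply, one_apply_eq_self]
  filter_upwards [Lp.coeFn_sub (k • v) (A v), Lp.coeFn_smul k v, hA v] with p hsub hsmul hAv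
  rw [hsub, Pi.sub_apply, hsmul, Pi.smul_apply, hAv, averagingOperator, smul_eq_mul]
  ring

variable [IsProbabilityMeasure μ] [IsProbabilityMeasure ν]

theorem sliceIntegral_affine (hg : Integrable g μ) (hg0 : ∫ x, g x ∂μ = 0) {v : α × β → ℂ}
    (hv : Integrable v (μ.prod ν)) (a d : ℂ) (b e : β → ℂ) :
    sliceIntegral μ (fun p => a * v p + b p.2 + g p.1 * e p.2 + d) =ᵐ[ν]
      fun y => a * sliceIntegral μ v y + b y + d := by
  filter_upwards [hv.prod_left_ae] with y hvy
  have h₁ := hvy.const_mul a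
  have h₂ := h₁.add (integrable_const (b y))
  simp only [sliceIntegral]
  rw [integral_add (by exact h₂.add (hg.mul_const (e y))) (integrable_const d),
    integral_add (by exact h₂) (hg.mul_const _), integral_add h₁ (integrable_const _),
    integral_const_mul, integral_mul_const, hg0]
  simp

theorem sliceIntegral_mul_affine (hg : MemLp g 2 μ) (hg0 : ∫ x, g x ∂μ = 0) {v : α × β → ℂ}
    (hgv : Integrable (fun p => g p.1 * v p) (μ.prod ν)) (a d : ℂ) (b e : β → ℂ) :
    sliceIntegral μ (fun p => g p.1 * (a * v p + b p.2 + g p.1 * e p.2 + d)) =ᵐ[ν]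
      fun y => a * sliceIntegral μ (fun p => g p.1 * v p) y + (∫ x, g x ^ 2 ∂μ) * e y := by
  have hg₁ : Integrable g μ := hg.integrable one_le_two
  have hg₂ : Integrable (fun x => g x ^ 2) μ := by
    simp only [sq]
    exact hg.integrable_mul hg
  filter_upwards [hgv.prod_left_ae] with y hvy
  have h₁ := hvy.const_mul a
  have hsplit : ∀ x, g x * (a * v (x, y) + b y + g x * e y + d)
      = a * (g x * v (x, y)) + g x * (b y + d) + g x ^ 2 * e y := fun x => by ring
  simp_rw [sliceIntegral, hsplit]
  rw [integral_add (by exact h₁.add (hg₁.mul_const _)) (hg₂.mul_const _),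
    integral_add h₁ (hg₁.mul_const _), integral_const_mul, integral_mul_const,
    integral_mul_const, hg0]
  ring

theorem integral_affine (hg : Integrable g μ) (hg0 : ∫ x, g x ∂μ = 0) {v : α × β → ℂ}
    (hv : Integrable v (μ.prod ν)) {b e : β → ℂ} (hb : Integrable b ν) (he : Integrable e ν)
    (a d : ℂ) :
    ∫ p, (a * v p + b p.2 + g p.1 * e p.2 + d) ∂μ.prod ν =
      a * ∫ p, v p ∂μ.prod ν + ∫ y, b y ∂ν + d := by
  have h₁ := (hv.const_mul a).add (hb.comp_snd μ)
  have h₂ := h₁.add (hg.mul_prod he)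
  rw [integral_add (by exact h₂) (integrable_const d),
    integral_add (by exact h₁) (hg.mul_prod he), integral_add (hv.const_mul a) (hb.comp_snd μ),
    integral_const_mul, integral_fun_snd, integral_prod_mul, hg0]
  simp

theorem sliceIntegral_smul_one_sub_apply (hg : MemLp g 2 μ) (hg0 : ∫ x, g x ∂μ = 0)
    (hA : ∀ u, A u =ᵐ[μ.prod ν] averagingOperator μ ν g u) (k : ℂ) (v : Lp ℂ 2 (μ.prod ν)) :
    sliceIntegral μ ((k • 1 - A) v) =ᵐ[ν] fun y =>
      (k + 1) * sliceIntegral μ v y + ∫ q, v q ∂μ.prod ν := by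
  filter_upwards [sliceIntegral_congr_ae (smul_one_sub_apply_ae_eq hA k v),
    sliceIntegral_affine (hg.integrable one_le_two) hg0 ((Lp.memLp v).integrable one_le_two)
      k _ _ _] with y h₁ h₂
  rw [h₁, h₂]
  ring

theorem sliceIntegral_mul_smul_one_sub_apply (hg : MemLp g 2 μ) (hg0 : ∫ x, g x ∂μ = 0)
    (hA : ∀ u, A u =ᵐ[μ.prod ν] averagingOperator μ ν g u) (k : ℂ) (v : Lp ℂ 2 (μ.prod ν)) :
    sliceIntegral μ (fun p => g p.1 * (k • 1 - A) v p) =ᵐ[ν] fun y =>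
      (k + ∫ x, g x ^ 2 ∂μ) * sliceIntegral μ (fun p => g p.1 * v p) y := by
  filter_upwards [sliceIntegral_congr_ae ((smul_one_sub_apply_ae_eq hA k v).mono
      fun p (hp : (k • 1 - A) v p = _) => congrArg (g p.1 * ·) hp),
    sliceIntegral_mul_affine hg hg0 (integrable_fst_mul hg v) k _ _ _] with y h₁ h₂
  rw [h₁, h₂]
  ring

theorem integral_smul_one_sub_apply (hg : MemLp g 2 μ) (hg0 : ∫ x, g x ∂μ = 0)
    (hA : ∀ u, A u =ᵐ[μ.prod ν] averagingOperator μ ν g u) (k : ℂ) (v : Lp ℂ 2 (μ.prod ν)) :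
    ∫ p, (k • 1 - A) v p ∂μ.prod ν = (k + 2) * ∫ p, v p ∂μ.prod ν := by
  have hv := (Lp.memLp v).integrable one_le_two
  rw [integral_congr_ae (smul_one_sub_apply_ae_eq hA k v),
    integral_affine (hg.integrable one_le_two) hg0 hv (integrable_sliceIntegral hv)
      (integrable_sliceIntegral (integrable_fst_mul hg v)), integral_sliceIntegral hv]
  ring

open Polynomial in
theorem aeval_averagingOperator_eq_zero (hg : MemLp g 2 μ) (hg0 : ∫ x, g x ∂μ = 0)
    (hA : ∀ u, A u =ᵐ[μ.prod ν] averagingOperator μ ν g u) {c : ℂ}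
    (hc : ∫ x, g x ^ 2 ∂μ = c) :
    aeval A ((C 0 - X) * (C (-1) - X) * (C (-c) - X) * (C (-2) - X)) = 0 := by
  simp only [map_mul, map_sub, aeval_C, aeval_X, Algebra.algebraMap_eq_smul_one]
  ext1 u
  simp only [mul_apply_eq_comp, zero_apply]
  set w₁ := ((-2 : ℂ) • 1 - A) u
  set w₂ := ((-c) • 1 - A) w₁
  set w₃ := ((-1 : ℂ) • 1 - A) w₂
  have hM₁ : ∫ p, w₁ p ∂μ.prod ν = 0 := by
    rw [integral_smul_one_sub_apply hg hg0 hA]; ring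
  have hM₂ : ∫ p, w₂ p ∂μ.prod ν = 0 := by
    rw [integral_smul_one_sub_apply hg hg0 hA, hM₁, mul_zero]
  have hM₃ : ∫ p, w₃ p ∂μ.prod ν = 0 := by
    rw [integral_smul_one_sub_apply hg hg0 hA, hM₂, mul_zero]
  have hG₂ : sliceIntegral μ (fun p => g p.1 * w₂ p) =ᵐ[ν] 0 := by
    filter_upwards [sliceIntegral_mul_smul_one_sub_apply hg hg0 hA (-c) w₁] with y h
    rw [h, hc]; simp
  have hG₃ : sliceIntegral μ (fun p => g p.1 * w₃ p) =ᵐ[ν] 0 := by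
    filter_upwards [sliceIntegral_mul_smul_one_sub_apply hg hg0 hA (-1) w₂, hG₂] with y h h₂
    rw [h, h₂]; simp
  have hS₃ : sliceIntegral μ w₃ =ᵐ[ν] 0 := by
    filter_upwards [sliceIntegral_smul_one_sub_apply hg hg0 hA (-1) w₂] with y h
    rw [h, hM₂]; simp
  rw [Lp.eq_zero_iff_ae_eq_zero]
  filter_upwards [smul_one_sub_apply_ae_eq hA 0 w₃,
    Measure.quasiMeasurePreserving_snd.ae_eq_comp hS₃,
    Measure.quasiMeasurePreserving_snd.ae_eq_comp hG₃] with p h h₁ h₂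
  simp only [Function.comp_apply] at h₁ h₂
  rw [h, h₁, h₂, hM₃]
  simp

theorem isUnit_smul_one_sub (hg : MemLp g 2 μ) (hg0 : ∫ x, g x ∂μ = 0)
    (hA : ∀ u, A u =ᵐ[μ.prod ν] averagingOperator μ ν g u) {c : ℂ}
    (hc : ∫ x, g x ^ 2 ∂μ = c) {l : ℂ} (hl0 : l ≠ 0) (hl1 : l + 1 ≠ 0) (hlc : l + c ≠ 0)
    (hl2 : l + 2 ≠ 0) : IsUnit (l • 1 - A) := by
  rw [← Algebra.algebraMap_eq_smul_one]
  refine isUnit_algebraMap_sub_of_aeval_eq_zero (aeval_averagingOperator_eq_zero hg hg0 hA hc) ?_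
  have hfactor : (0 - l) * (-1 - l) * (-c - l) * (-2 - l) = l * (l + 1) * (l + c) * (l + 2) := by
    ring
  simpa only [Polynomial.eval_mul, Polynomial.eval_sub, Polynomial.eval_C, Polynomial.eval_X,
    hfactor] using mul_ne_zero (mul_ne_zero (mul_ne_zero hl0 hl1) hlc) hl2

theorem ring_inverse_smul_one_sub_apply_ae_eq (hg : MemLp g 2 μ) (hg0 : ∫ x, g x ∂μ = 0)
    (hA : ∀ u, A u =ᵐ[μ.prod ν] averagingOperator μ ν g u) {c : ℂ}
    (hc : ∫ x, g x ^ 2 ∂μ = c) {l : ℂ} (hl0 : l ≠ 0) (hl1 : l + 1 ≠ 0) (hlc : l + c ≠ 0)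
    (hl2 : l + 2 ≠ 0) (u : Lp ℂ 2 (μ.prod ν)) :
    (Ring.inverse (l • 1 - A) u : α × β → ℂ) =ᵐ[μ.prod ν] fun p =>
      l⁻¹ * (u p - (l + 1)⁻¹ * sliceIntegral μ u p.2 -
          g p.1 * (l + c)⁻¹ * sliceIntegral μ (fun q => g q.1 * u q) p.2 -
        (l + 2)⁻¹ * ∫ q, (u q - (l + 1)⁻¹ * sliceIntegral μ u q.2 -
          g q.1 * (l + c)⁻¹ * sliceIntegral μ (fun q => g q.1 * u q) q.2) ∂μ.prod ν) := by
  set v := Ring.inverse (l • 1 - A) u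
  have hv : (l • 1 - A) v = u := by
    rw [← mul_apply_eq_comp,
      Ring.mul_inverse_cancel _ (isUnit_smul_one_sub hg hg0 hA hc hl0 hl1 hlc hl2),
      one_apply_eq_self]
  have hu := (Lp.memLp u).integrable one_le_two
  have hS := hv ▸ sliceIntegral_smul_one_sub_apply hg hg0 hA l v
  have hG := hv ▸ sliceIntegral_mul_smul_one_sub_apply hg hg0 hA l v
  rw [hc] at hG
  have hM := hv ▸ integral_smul_one_sub_apply hg hg0 hA l v
  have hMw : ∫ q, (u q - (l + 1)⁻¹ * sliceIntegral μ u q.2 -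
      g q.1 * (l + c)⁻¹ * sliceIntegral μ (fun q => g q.1 * u q) q.2) ∂μ.prod ν =
      (1 - (l + 1)⁻¹) * ∫ q, u q ∂μ.prod ν := by
    calc _ = ∫ q, (1 * u q + -(l + 1)⁻¹ * sliceIntegral μ u q.2 +
          g q.1 * (-(l + c)⁻¹ * sliceIntegral μ (fun q => g q.1 * u q) q.2) + 0) ∂μ.prod ν := by
          congr 1; funext q; ring
      _ = _ := by
        rw [integral_affine (hg.integrable one_le_two) hg0 hu
          ((integrable_sliceIntegral hu).const_mul _)
          ((integrable_sliceIntegral (integrable_fst_mul hg u)).const_mul _),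
          integral_const_mul, integral_sliceIntegral hu]
        ring
  filter_upwards [hv ▸ smul_one_sub_apply_ae_eq hA l v,
    Measure.quasiMeasurePreserving_snd.ae_eq_comp hS,
    Measure.quasiMeasurePreserving_snd.ae_eq_comp hG] with p h h₁ h₂
  simp only [Function.comp_apply] at h₁ h₂
  rw [hMw, h, h₁, h₂, hM]
  field_simp
  ring

end

/-- For the operator `𝒜u = −⟨u⟩₁ − f⟨fu⟩₁ − ⟨u⟩₂` on `L²([0,1]²)` with `∫₀¹f = 0`,
and any `λ ∉ {0, −1, −∫f², −2}`, the operator `λI − 𝒜` is invertible and its inverse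
is `λ⁻¹(I − (λ+2)⁻¹⟨·⟩₂) ∘ (I − (λ+1)⁻¹⟨·⟩₁ − f(λ+⟨f²⟩)⁻¹⟨f·⟩₁)`. -/
theorem stmt11 (f : ℝ → ℝ) (hf : ContinuousOn f (Icc 0 1))
    (hf0 : (∫ k in Icc (0 : ℝ) 1, f k) = 0)
    (c : ℝ) (hc : c = ∫ k in Icc (0 : ℝ) 1, (f k) ^ 2)
    (μ : Measure (ℝ × ℝ)) (hμ : μ = volume.restrict ((Icc 0 1) ×ˢ (Icc 0 1)))
    (A : Lp ℂ 2 μ →L[ℂ] Lp ℂ 2 μ)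
    (hA : ∀ u : Lp ℂ 2 μ, (A u : ℝ × ℝ → ℂ) =ᵐ[μ]
      fun p => -(∫ s in Icc (0 : ℝ) 1, (u : ℝ × ℝ → ℂ) (s, p.2)) -
        (f p.1 : ℂ) * (∫ s in Icc (0 : ℝ) 1, (f s : ℂ) * (u : ℝ × ℝ → ℂ) (s, p.2)) -
        ∫ q, (u : ℝ × ℝ → ℂ) q ∂μ)
    (l : ℂ) (hl : l ∉ ({0, -1, -(c : ℂ), -2} : Set ℂ)) :
    IsUnit (l • (1 : Lp ℂ 2 μ →L[ℂ] Lp ℂ 2 μ) - A) ∧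
    ∀ u : Lp ℂ 2 μ,
      ((Ring.inverse (l • (1 : Lp ℂ 2 μ →L[ℂ] Lp ℂ 2 μ) - A)) u : ℝ × ℝ → ℂ) =ᵐ[μ]
        fun p => l⁻¹ *
          ((fun q : ℝ × ℝ => (u : ℝ × ℝ → ℂ) q -
              (l + 1)⁻¹ * (∫ s in Icc (0 : ℝ) 1, (u : ℝ × ℝ → ℂ) (s, q.2)) -
              (f q.1 : ℂ) * (l + (c : ℂ))⁻¹ *
                ∫ s in Icc (0 : ℝ) 1, (f s : ℂ) * (u : ℝ × ℝ → ℂ) (s, q.2)) p -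
            (l + 2)⁻¹ * ∫ q, ((u : ℝ × ℝ → ℂ) q -
              (l + 1)⁻¹ * (∫ s in Icc (0 : ℝ) 1, (u : ℝ × ℝ → ℂ) (s, q.2)) -
              (f q.1 : ℂ) * (l + (c : ℂ))⁻¹ *
                ∫ s in Icc (0 : ℝ) 1, (f s : ℂ) * (u : ℝ × ℝ → ℂ) (s, q.2)) ∂μ) := by
  simp only [mem_insert_iff, mem_singleton_iff, not_or] at hl
  obtain ⟨hl0, hl1, hlc, hl2⟩ := hl
  replace hl1 := mt add_eq_zero_iff_eq_neg.mp hl1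
  replace hlc := mt add_eq_zero_iff_eq_neg.mp hlc
  replace hl2 := mt add_eq_zero_iff_eq_neg.mp hl2
  have : IsProbabilityMeasure (volume.restrict (Icc (0 : ℝ) 1)) := ⟨by simp⟩
  obtain rfl : μ = (volume.restrict (Icc (0 : ℝ) 1)).prod (volume.restrict (Icc (0 : ℝ) 1)) := by
    rw [hμ, Measure.prod_restrict, ← Measure.volume_eq_prod]
  obtain ⟨C, hC⟩ := isCompact_Icc.exists_bound_of_continuousOn hf
  have hg : MemLp (fun x => (f x : ℂ)) 2 (volume.restrict (Icc (0 : ℝ) 1)) :=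
    (memLp_top_of_bound ((Complex.continuous_ofReal.comp_continuousOn hf).aestronglyMeasurable
      measurableSet_Icc) C (ae_restrict_of_forall_mem measurableSet_Icc fun x hx => by
        simpa using hC x hx)).mono_exponent le_top
  have hg0 : ∫ x in Icc (0 : ℝ) 1, (f x : ℂ) = 0 := by
    rw [integral_complex_ofReal, hf0, Complex.ofReal_zero]
  have hgc : ∫ x in Icc (0 : ℝ) 1, (f x : ℂ) ^ 2 = c := by
    simp_rw [← Complex.ofReal_pow]
    rw [integral_complex_ofReal, hc]
  exact ⟨isUnit_smul_one_sub hg hg0 hA hgc hl0 hl1 hlc hl2,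
    ring_inverse_smul_one_sub_apply_ae_eq hg hg0 hA hgc hl0 hl1 hlc hl2⟩
end

section
/- With 𝒜 as in the two-dimensional example (𝒜u = −⟨u⟩₁ − f⟨fu⟩₁ − ⟨u⟩₂ on L²([0,1]²), ∫₀¹ f = 0, c := ∫₀¹ f²), the vector-valued traces of powers of 𝒜 are 𝛕(𝒜ⁿ) = (−1)ⁿ (0, 1 + cⁿ, 2ⁿ − 1) for all n ≥ 1, where 𝛕(A₀· + A₁⟨B₁·⟩₁ + A₂⟨B₂·⟩₂) = (Tr A₀, ⟨Tr B₁A₁⟩₁, ⟨Tr B₂A₂⟩₂). -/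
/-!
Functions of the form `a ⟨u⟩₁ + b f ⟨f u⟩₁ + d ⟨u⟩₂` are closed under `𝒜`, and more generally
under composition. Because `∫ f = 0` and `∫ f² = c`, the first-variable average of such a
function is `a ⟨u⟩₁ + d ⟨u⟩₂`, its `f`-weighted average is `b c ⟨f u⟩₁`, and its total mean is
`(a + d) ⟨u⟩₂`. So the coefficients compose as
`(a', b', d') ∘ (a, b, d) = (a' a, b' b c, a' d + d' (a + d))`, and iterating from
`𝒜 = (-1, -1, -1)` gives `𝒜ⁿ = (-1)ⁿ (1, cⁿ⁻¹, 2ⁿ - 1)`. The middle trace is then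
`∫ (-1)ⁿ (1 + cⁿ⁻¹ f²) = (-1)ⁿ (1 + cⁿ)`.
-/

open MeasureTheory Set

theorem MeasureTheory.Measure.ae_ae_of_ae_prod_swap {α β : Type*} [MeasurableSpace α]
    [MeasurableSpace β] {μ : Measure α} {ν : Measure β} [SFinite μ] [SFinite ν] {p : α × β → Prop}
    (h : ∀ᵐ z ∂μ.prod ν, p z) : ∀ᵐ y ∂ν, ∀ᵐ x ∂μ, p (x, y) :=
  Measure.ae_ae_of_ae_prod (Measure.measurePreserving_swap.quasiMeasurePreserving.ae h)

section CanonicalForm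

variable {X : Type*} [MeasurableSpace X] {ν : Measure X}

/-- `a ⟨u⟩₁ + b g ⟨g u⟩₁ + d ⟨u⟩₂`, where `⟨·⟩₁` averages over the first variable only and
`⟨·⟩₂` over both: the paper's canonical representation with `A₀ = 0`, `A₁ = (a, b g)`,
`B₁ = (1; g)` and `A₂ B₂ = d`. -/
noncomputable def canonicalForm (ν : Measure X) (g : X → ℂ) (a b d : ℂ) (u : X × X → ℂ) :
    X × X → ℂ :=
  fun p => a * (∫ s, u (s, p.2) ∂ν) + b * g p.1 * (∫ s, g s * u (s, p.2) ∂ν) +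
    d * ∫ q, u q ∂ν.prod ν

variable {g : X → ℂ} {κ : ℂ}

theorem integral_mul_canonicalForm_slice (hg : Integrable g ν)
    (hg2 : Integrable (fun x => g x ^ 2) ν) (hg0 : ∫ x, g x ∂ν = 0)
    (hκ : ∫ x, g x ^ 2 ∂ν = κ) (a b d : ℂ) (u : X × X → ℂ) (y : X) :
    ∫ x, g x * canonicalForm ν g a b d u (x, y) ∂ν = b * κ * ∫ s, g s * u (s, y) ∂ν := by
  have hsplit : (fun x => g x * canonicalForm ν g a b d u (x, y)) = fun x =>
      (a * (∫ s, u (s, y) ∂ν) + d * ∫ q, u q ∂ν.prod ν) * g x +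
        (b * ∫ s, g s * u (s, y) ∂ν) * g x ^ 2 := by
    funext x; simp only [canonicalForm]; ring
  rw [hsplit, integral_add (hg.const_mul _) (hg2.const_mul _), integral_const_mul,
    integral_const_mul, hg0, hκ]
  ring

variable [IsProbabilityMeasure ν]

theorem integral_canonicalForm_slice (hg : Integrable g ν) (hg0 : ∫ x, g x ∂ν = 0)
    (a b d : ℂ) (u : X × X → ℂ) (y : X) :
    ∫ x, canonicalForm ν g a b d u (x, y) ∂ν =
      a * (∫ s, u (s, y) ∂ν) + d * ∫ q, u q ∂ν.prod ν := by
  have hsplit : (fun x => canonicalForm ν g a b d u (x, y)) = fun x =>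
      (a * (∫ s, u (s, y) ∂ν) + d * ∫ q, u q ∂ν.prod ν) + (b * ∫ s, g s * u (s, y) ∂ν) * g x := by
    funext x; simp only [canonicalForm]; ring
  rw [hsplit, integral_add (integrable_const _) (hg.const_mul _), integral_const,
    integral_const_mul, hg0]
  simp

theorem integral_eq_of_ae_eq_canonicalForm {u v : X × X → ℂ} (hu : Integrable u (ν.prod ν))
    (hv : Integrable v (ν.prod ν)) (hg : Integrable g ν) (hg0 : ∫ x, g x ∂ν = 0) {a b d : ℂ}
    (hvu : v =ᵐ[ν.prod ν] canonicalForm ν g a b d u) :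
    ∫ q, v q ∂ν.prod ν = (a + d) * ∫ q, u q ∂ν.prod ν := by
  have hslice : ∀ᵐ y ∂ν, ∫ x, v (x, y) ∂ν = a * (∫ s, u (s, y) ∂ν) + d * ∫ q, u q ∂ν.prod ν := by
    filter_upwards [Measure.ae_ae_of_ae_prod_swap hvu] with y hy
    rw [integral_congr_ae hy, integral_canonicalForm_slice hg hg0]
  rw [integral_prod_symm v hv, integral_congr_ae hslice,
    integral_add (hu.integral_prod_right.const_mul _) (integrable_const _), integral_const_mul,
    ← integral_prod_symm u hu, integral_const, probReal_univ, one_smul]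
  ring

theorem canonicalForm_ae_eq_of_ae_eq {u v : X × X → ℂ} (hu : Integrable u (ν.prod ν))
    (hv : Integrable v (ν.prod ν)) (hg : Integrable g ν)
    (hg2 : Integrable (fun x => g x ^ 2) ν) (hg0 : ∫ x, g x ∂ν = 0)
    (hκ : ∫ x, g x ^ 2 ∂ν = κ) {a b d : ℂ} (hvu : v =ᵐ[ν.prod ν] canonicalForm ν g a b d u)
    (a' b' d' : ℂ) :
    canonicalForm ν g a' b' d' v =ᵐ[ν.prod ν]
      canonicalForm ν g (a' * a) (b' * b * κ) (a' * d + d' * (a + d)) u := by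
  have hslices : ∀ᵐ y ∂ν,
      ∫ x, v (x, y) ∂ν = a * (∫ s, u (s, y) ∂ν) + d * ∫ q, u q ∂ν.prod ν ∧
      ∫ x, g x * v (x, y) ∂ν = b * κ * ∫ s, g s * u (s, y) ∂ν := by
    filter_upwards [Measure.ae_ae_of_ae_prod_swap hvu] with y hy
    refine ⟨?_, ?_⟩
    · rw [integral_congr_ae hy, integral_canonicalForm_slice hg hg0]
    · rw [integral_congr_ae (hy.mono fun x hx => by rw [hx]),
        integral_mul_canonicalForm_slice hg hg2 hg0 hκ]
  filter_upwards [(Measure.quasiMeasurePreserving_snd (μ := ν)).ae hslices] with p ⟨hI, hJ⟩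
  simp only [canonicalForm] at hI hJ ⊢
  rw [hI, hJ, integral_eq_of_ae_eq_canonicalForm hu hv hg hg0 hvu]
  ring

theorem pow_succ_ae_eq_canonicalForm (hg : Integrable g ν)
    (hg2 : Integrable (fun x => g x ^ 2) ν) (hg0 : ∫ x, g x ∂ν = 0)
    (hκ : ∫ x, g x ^ 2 ∂ν = κ) (T : Lp ℂ 2 (ν.prod ν) →L[ℂ] Lp ℂ 2 (ν.prod ν))
    (hT : ∀ u : Lp ℂ 2 (ν.prod ν),
      (T u : X × X → ℂ) =ᵐ[ν.prod ν] canonicalForm ν g (-1) (-1) (-1) u)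
    (m : ℕ) (u : Lp ℂ 2 (ν.prod ν)) :
    ((T ^ (m + 1)) u : X × X → ℂ) =ᵐ[ν.prod ν]
      canonicalForm ν g ((-1) ^ (m + 1)) ((-1) ^ (m + 1) * κ ^ m)
        ((-1) ^ (m + 1) * (2 ^ (m + 1) - 1)) u := by
  have hint (w : Lp ℂ 2 (ν.prod ν)) : Integrable (w : X × X → ℂ) (ν.prod ν) :=
    (Lp.memLp w).integrable one_le_two
  induction m with
  | zero => exact (hT u).trans (.of_eq (by norm_num))
  | succ m ih =>
    rw [pow_succ']
    refine (hT _).trans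
      ((canonicalForm_ae_eq_of_ae_eq (hint u) (hint _) hg hg2 hg0 hκ ih _ _ _).trans (.of_eq ?_))
    congr 1 <;> ring

end CanonicalForm

/-- For `𝒜u = −⟨u⟩₁ − f⟨fu⟩₁ − ⟨u⟩₂` on `L²([0,1]²)` with `∫₀¹f = 0`, `c = ∫₀¹f²`:
for every `n ≥ 1` the power `𝒜ⁿ` has the canonical representation
`𝒜ⁿu = (−1)ⁿ(⟨u⟩₁ + cⁿ⁻¹ f⟨fu⟩₁ + (2ⁿ−1)⟨u⟩₂)` (i.e. `A₀ = 0`,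
`A₁ = (−1)ⁿ(1, cⁿ⁻¹f)`, `B₁ = (1; f)ᵀ`, `A₂B₂ = (−1)ⁿ(2ⁿ−1)`), and the
vector-valued trace `𝛕(𝒜ⁿ) = (Tr A₀, ⟨Tr B₁A₁⟩₁, ⟨Tr B₂A₂⟩₂)` equals
`(−1)ⁿ(0, 1 + cⁿ, 2ⁿ − 1)`. -/
theorem stmt13 (f : ℝ → ℝ) (hf : ContinuousOn f (Icc 0 1))
    (hf0 : (∫ k in Icc (0 : ℝ) 1, f k) = 0)
    (c : ℝ) (hc : c = ∫ k in Icc (0 : ℝ) 1, (f k) ^ 2)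
    (μ : Measure (ℝ × ℝ)) (hμ : μ = volume.restrict ((Icc 0 1) ×ˢ (Icc 0 1)))
    (A : Lp ℂ 2 μ →L[ℂ] Lp ℂ 2 μ)
    (hA : ∀ u : Lp ℂ 2 μ, (A u : ℝ × ℝ → ℂ) =ᵐ[μ]
      fun p => -(∫ s in Icc (0 : ℝ) 1, (u : ℝ × ℝ → ℂ) (s, p.2)) -
        (f p.1 : ℂ) * (∫ s in Icc (0 : ℝ) 1, (f s : ℂ) * (u : ℝ × ℝ → ℂ) (s, p.2)) -
        ∫ q, (u : ℝ × ℝ → ℂ) q ∂μ) :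
    ∀ n : ℕ, 1 ≤ n →
      (∀ u : Lp ℂ 2 μ, ((A ^ n) u : ℝ × ℝ → ℂ) =ᵐ[μ]
        fun p => (-1 : ℂ) ^ n *
          ((∫ s in Icc (0 : ℝ) 1, (u : ℝ × ℝ → ℂ) (s, p.2)) +
            (c : ℂ) ^ (n - 1) * (f p.1 : ℂ) *
              (∫ s in Icc (0 : ℝ) 1, (f s : ℂ) * (u : ℝ × ℝ → ℂ) (s, p.2)) +
            ((2 : ℂ) ^ n - 1) * ∫ q, (u : ℝ × ℝ → ℂ) q ∂μ)) ∧
      ((0 : ℂ),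
        (∫ s in Icc (0 : ℝ) 1, (-1 : ℂ) ^ n * (1 + (c : ℂ) ^ (n - 1) * (f s : ℂ) ^ 2)),
        (-1 : ℂ) ^ n * ((2 : ℂ) ^ n - 1))
        = ((0 : ℂ), (-1 : ℂ) ^ n * (1 + (c : ℂ) ^ n), (-1 : ℂ) ^ n * ((2 : ℂ) ^ n - 1)) := by
  set ν : Measure ℝ := volume.restrict (Icc 0 1)
  obtain rfl : μ = ν.prod ν := by
    rw [hμ, Measure.prod_restrict, ← Measure.volume_eq_prod]
  have : IsProbabilityMeasure ν := ⟨by simp [ν]⟩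
  have hg : Integrable (fun x => (f x : ℂ)) ν := hf.integrableOn_Icc.ofReal
  have hg2 : Integrable (fun x => (f x : ℂ) ^ 2) ν := by
    simp_rw [← Complex.ofReal_pow]
    exact (hf.pow 2).integrableOn_Icc.ofReal
  have hg0 : ∫ x, (f x : ℂ) ∂ν = 0 := by
    rw [integral_complex_ofReal, hf0, Complex.ofReal_zero]
  have hgc : ∫ x, (f x : ℂ) ^ 2 ∂ν = c := by
    simp_rw [← Complex.ofReal_pow]
    rw [integral_complex_ofReal, hc]
  have hA' : ∀ u, (A u : ℝ × ℝ → ℂ) =ᵐ[ν.prod ν]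
      canonicalForm ν (fun x => (f x : ℂ)) (-1) (-1) (-1) u := by
    intro u
    filter_upwards [hA u] with p hp
    rw [hp, canonicalForm]
    ring
  rintro n hn
  obtain ⟨m, rfl⟩ := Nat.exists_eq_add_of_le' hn
  refine ⟨fun u => ?_, ?_⟩
  · filter_upwards [pow_succ_ae_eq_canonicalForm hg hg2 hg0 hgc A hA' m u] with p hp
    rw [hp, canonicalForm, Nat.add_sub_cancel]
    ring
  · rw [Nat.add_sub_cancel, integral_const_mul, integral_add (integrable_const _) (hg2.const_mul _),
      integral_const_mul, hgc]
    simp [pow_succ]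
end

section
/- Let G be a group and suppose G = F₀F₁⋯F_N where each Fⱼ ≤ G is a subgroup, the decomposition g = g₀g₁⋯g_N with gⱼ ∈ Fⱼ is unique for every g ∈ G, and for each j there is a group homomorphism πⱼ : Fⱼ → ℂ* such that for all i ≠ j and a ∈ F_i, b ∈ Fⱼ, the rearrangement a·b = b'·a' (with b' ∈ Fⱼ, a' ∈ F_i the unique such elements) satisfies πⱼ(b') = πⱼ(b) and π_i(a') = π_i(a). Then the map 𝛑 : G → (ℂ*)^{N+1} defined by 𝛑(g) = (π₀(g₀), …, π_N(g_N)) is a group homomorphism. -/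
/-!
Write `g = g₀ ⋯ g_N` and `h = h₀ ⋯ h_N`. In `g h = g₀ ⋯ g_N h₀ ⋯ h_N`, move `h₀` to the left across
`g_N, …, g₁`, then `h₁` across the new `g_N, …, g₂`, and so on. Each crossing is a rearrangement,
which changes no character value, so the end result is a factorization `(g₀ h₀')(g₁' h₁') ⋯` of
`g h`; by uniqueness it is the factorization of `g h`, and `πⱼ (gⱼ' hⱼ') = πⱼ gⱼ · πⱼ hⱼ`.
-/

section Rearrangement

variable {G M : Type*} [Group G]

def RearrangementCompatible (H K : Subgroup G) (χ ψ : G → M) : Prop :=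
  ∀ a ∈ H, ∀ b ∈ K, ∃ a' ∈ H, ∃ b' ∈ K, a * b = b' * a' ∧ χ a' = χ a ∧ ψ b' = ψ b

theorem exists_prod_ofFn_mul_eq_mul_prod_ofFn {n : ℕ} {F : Fin n → Subgroup G}
    {p : Fin n → G → M} {H : Subgroup G} {q : G → M}
    (hre : ∀ i, RearrangementCompatible (F i) H (p i) q)
    {a : Fin n → G} (ha : ∀ i, a i ∈ F i) {b : G} (hb : b ∈ H) :
    ∃ b' ∈ H, q b' = q b ∧ ∃ a' : Fin n → G, (∀ i, a' i ∈ F i ∧ p i (a' i) = p i (a i)) ∧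
      (List.ofFn a).prod * b = b' * (List.ofFn a').prod := by
  induction n with
  | zero => exact ⟨b, hb, rfl, a, fun i => i.elim0, by simp⟩
  | succ n ih =>
    obtain ⟨b₁, hb₁, hqb₁, t, ht, htb⟩ := ih (fun i => hre i.succ) (fun i => ha i.succ)
    obtain ⟨a₀, ha₀, b', hb', hswap, hpa₀, hqb'⟩ := hre 0 (a 0) (ha 0) b₁ hb₁
    refine ⟨b', hb', hqb'.trans hqb₁, Fin.cons a₀ t, Fin.cases ⟨ha₀, hpa₀⟩ ht, ?_⟩
    simp only [List.ofFn_succ, List.prod_cons, Fin.cons_zero, Fin.cons_succ]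
    rw [mul_assoc, htb, ← mul_assoc, hswap, mul_assoc]

theorem exists_prod_ofFn_mul_prod_ofFn_eq [Mul M] {n : ℕ} {F : Fin n → Subgroup G}
    {p : Fin n → G → M} (hhom : ∀ j, ∀ a ∈ F j, ∀ b ∈ F j, p j (a * b) = p j a * p j b)
    (hre : ∀ i j, i ≠ j → RearrangementCompatible (F i) (F j) (p i) (p j))
    {a b : Fin n → G} (ha : ∀ i, a i ∈ F i) (hb : ∀ i, b i ∈ F i) :
    ∃ c : Fin n → G, (∀ i, c i ∈ F i ∧ p i (c i) = p i (a i) * p i (b i)) ∧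
      (List.ofFn a).prod * (List.ofFn b).prod = (List.ofFn c).prod := by
  induction n with
  | zero => exact ⟨a, fun i => i.elim0, by simp⟩
  | succ n ih =>
    obtain ⟨b₀, hb₀, hpb₀, a', ha', ha'b⟩ := exists_prod_ofFn_mul_eq_mul_prod_ofFn
      (fun i => hre i.succ 0 i.succ_ne_zero) (fun i => ha i.succ) (hb 0)
    obtain ⟨c, hc, hcprod⟩ := ih (fun j => hhom j.succ)
      (fun i j hij => hre i.succ j.succ (Fin.succ_injective _ |>.ne hij))
      (fun i => (ha' i).1) (fun i => hb i.succ)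
    refine ⟨Fin.cons (a 0 * b₀) c, Fin.forall_fin_succ.2 ⟨?_, fun i => ?_⟩, ?_⟩
    · exact ⟨mul_mem (ha 0) hb₀, by rw [Fin.cons_zero, hhom 0 _ (ha 0) _ hb₀, hpb₀]⟩
    · simpa only [Fin.cons_succ, (ha' i).2] using hc i
    · simp only [List.ofFn_succ, List.prod_cons, Fin.cons_zero, Fin.cons_succ]
      calc a 0 * (List.ofFn fun i => a i.succ).prod * (b 0 * (List.ofFn fun i => b i.succ).prod)
          = a 0 * ((List.ofFn fun i => a i.succ).prod * b 0) *
              (List.ofFn fun i => b i.succ).prod := by group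
        _ = a 0 * b₀ * (List.ofFn c).prod := by rw [ha'b, ← hcprod]; group

end Rearrangement

/-- A group with a unique ordered factorization into subgroups `F₀,…,F_N`, each
carrying a character compatible with rearrangements, admits a product character:
`𝛑(gh) = 𝛑(g)𝛑(h)` componentwise. -/
theorem stmt17 {G : Type*} [Group G] (N : ℕ) (F : Fin (N + 1) → Subgroup G)
    (fac : G → Fin (N + 1) → G)
    (hmem : ∀ g j, fac g j ∈ F j)
    (hprod : ∀ g, (List.ofFn (fac g)).prod = g)
    (huniq : ∀ g (h : Fin (N + 1) → G), (∀ j, h j ∈ F j) →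
      (List.ofFn h).prod = g → h = fac g)
    (p : Fin (N + 1) → G → ℂˣ)
    (hhom : ∀ j, ∀ a ∈ F j, ∀ b ∈ F j, p j (a * b) = p j a * p j b)
    (hre : ∀ i j, i ≠ j → ∀ a ∈ F i, ∀ b ∈ F j, ∃ a' ∈ F i, ∃ b' ∈ F j,
      a * b = b' * a' ∧ p i a' = p i a ∧ p j b' = p j b) :
    ∀ g h : G, ∀ j, p j (fac (g * h) j) = p j (fac g j) * p j (fac h j) := by
  intro g h j
  obtain ⟨c, hc, hcprod⟩ := exists_prod_ofFn_mul_prod_ofFn_eq hhom hre (hmem g) (hmem h)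
  rw [hprod, hprod] at hcprod
  obtain rfl : c = fac (g * h) := huniq _ c (fun i => (hc i).1) hcprod.symm
  exact (hc j).2
end
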